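/- arXiv:2103.09225 — 2 statements merged into one kernel-verified Lean document; each statement's English description precedes it below -/
import Mathlib

section
/- Let C be an [n,k] binary linear code with generator matrix G_C, let θ ∈ [0,π/2], set p = (1-cos θ)/2, and define ŝ(h) = 2^{-k/2} Σ_{g ∈ F_2^k} (-1)^{h·g^T} (cos θ)^{w_H(g G_C)}. Let y_h be the codeword of the dual-complement code C^⫫ corresponding to message h (via a matrix pair A, B = (A^{-1})^T as in the complementary-code setup). Then 2^{-k/2} ŝ(h) = Σ_{z ∈ y_h ⊕ C^⊥} p^{w_H(z)} (1-p)^{n - w_H(z)}; that is, the normalized Fourier transform of the overlap function equals the probability that an i.i.d. Bernoulli(p) error vector lies in the coset y_h ⊕ C^⊥. -/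
/-!
Write `cos θ = 1 - 2p`. The power `(1 - 2p)^{w_H(v)}` is the Fourier transform at `v` of the
Bernoulli(p) product distribution on `F_2^n`, since both factor over the coordinates. Substituting
this for `v = g G_C` and summing the characters over `g` first, orthogonality keeps exactly the error
vectors `z` with `G_C z = h`, each with weight `2^k`, which cancels the two normalisations. As `G_C`
is the top block of rows of the invertible `A`, these `z` are the vectors `A⁻¹ (h, u)`, and
`A⁻¹ (h, u) = h G_{C^⫫} + u G_{C^⊥}` because `B = (A⁻¹)ᵀ`.
-/

open Matrix

/-- Hamming weight of a binary vector. -/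
def hammingWt {ι : Type*} [Fintype ι] (v : ι → ZMod 2) : ℕ :=
  (Finset.univ.filter fun i => v i ≠ 0).card

open Finset

section Characters

variable {ι R : Type*} [CommRing R]

lemma ZMod.eq_zero_or_eq_one (a : ZMod 2) : a = 0 ∨ a = 1 := by
  decide +revert

lemma ZMod.sum_univ_two {M : Type*} [AddCommMonoid M] (f : ZMod 2 → M) :
    ∑ b, f b = f 0 + f 1 :=
  Fin.sum_univ_two f

lemma neg_one_pow_val_add (a b : ZMod 2) :
    (-1 : R) ^ (a + b).val = (-1) ^ a.val * (-1) ^ b.val := by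
  rw [ZMod.val_add, ← pow_add]
  exact (neg_one_pow_eq_pow_mod_two _).symm

lemma neg_one_pow_val_sum (s : Finset ι) (f : ι → ZMod 2) :
    (-1 : R) ^ (∑ i ∈ s, f i).val = ∏ i ∈ s, (-1 : R) ^ (f i).val := by
  classical
  induction s using Finset.induction_on with
  | empty => simp
  | insert a s ha ih => rw [sum_insert ha, neg_one_pow_val_add, ih, prod_insert ha]

variable [Fintype ι]

lemma sum_neg_one_pow_dotProduct_mul_prod [DecidableEq ι] (v : ι → ZMod 2) (f : ZMod 2 → R) :
    ∑ z : ι → ZMod 2, (-1 : R) ^ (v ⬝ᵥ z).val * ∏ i, f (z i)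
      = ∏ i, ∑ b : ZMod 2, (-1 : R) ^ (v i * b).val * f b := by
  simp only [Fintype.prod_sum, dotProduct, neg_one_pow_val_sum, prod_mul_distrib]

lemma sum_neg_one_pow_dotProduct [DecidableEq ι] (c : ι → ZMod 2) :
    ∑ g : ι → ZMod 2, (-1 : R) ^ (g ⬝ᵥ c).val = if c = 0 then 2 ^ Fintype.card ι else 0 := by
  have hcoord (a : ZMod 2) : ∑ b : ZMod 2, (-1 : R) ^ (a * b).val = if a = 0 then 2 else 0 := by
    rcases a.eq_zero_or_eq_one with rfl | rfl <;>
      simp [ZMod.sum_univ_two, ZMod.val_one]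
  have := sum_neg_one_pow_dotProduct_mul_prod (R := R) c 1
  simp only [Pi.one_apply, prod_const_one, mul_one, hcoord, Fintype.prod_ite_zero, prod_const,
    card_univ] at this
  simpa only [dotProduct_comm _ c, funext_iff, Pi.zero_apply] using this

lemma pow_hammingWt_mul_pow_sub_hammingWt (q : R) (z : ι → ZMod 2) :
    q ^ hammingWt z * (1 - q) ^ (Fintype.card ι - hammingWt z)
      = ∏ i, if z i = 0 then 1 - q else q := by
  classical
  rw [prod_ite, prod_const, prod_const, hammingWt, mul_comm]
  congr 2
  rw [← card_univ, ← card_filter_add_card_filter_not (fun i => z i = 0) (s := univ)]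
  simp

lemma sum_neg_one_pow_dotProduct_mul_bernoulli [DecidableEq ι] (q : R) (v : ι → ZMod 2) :
    ∑ z : ι → ZMod 2, (-1 : R) ^ (v ⬝ᵥ z).val *
        (q ^ hammingWt z * (1 - q) ^ (Fintype.card ι - hammingWt z))
      = (1 - 2 * q) ^ hammingWt v := by
  have hcoord (a : ZMod 2) :
      ∑ b : ZMod 2, (-1 : R) ^ (a * b).val * (if b = 0 then 1 - q else q)
        = if a = 0 then 1 else 1 - 2 * q := by
    rcases a.eq_zero_or_eq_one with rfl | rfl
    · simp [ZMod.sum_univ_two]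
    · simp [ZMod.sum_univ_two, ZMod.val_one]; ring
  simp only [pow_hammingWt_mul_pow_sub_hammingWt]
  rw [sum_neg_one_pow_dotProduct_mul_prod v (fun b => if b = 0 then 1 - q else q)]
  simp only [hcoord]
  rw [prod_ite, prod_const_one, one_mul, prod_const, hammingWt]

lemma sum_neg_one_pow_dotProduct_mul_pow_hammingWt_vecMul {κ : Type*} [Fintype κ] [DecidableEq κ]
    [DecidableEq ι] (G : Matrix κ ι (ZMod 2)) (h : κ → ZMod 2) (q : R) :
    ∑ g : κ → ZMod 2, (-1 : R) ^ (h ⬝ᵥ g).val * (1 - 2 * q) ^ hammingWt (g ᵥ* G)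
      = 2 ^ Fintype.card κ * ∑ z with G *ᵥ z = h,
          q ^ hammingWt z * (1 - q) ^ (Fintype.card ι - hammingWt z) := by
  have hchar (g : κ → ZMod 2) (z : ι → ZMod 2) :
      (-1 : R) ^ (h ⬝ᵥ g).val * (-1) ^ ((g ᵥ* G) ⬝ᵥ z).val = (-1) ^ (g ⬝ᵥ (h + G *ᵥ z)).val := by
    rw [dotProduct_add, neg_one_pow_val_add, dotProduct_comm h g, dotProduct_mulVec]
  have hker (z : ι → ZMod 2) : h + G *ᵥ z = 0 ↔ G *ᵥ z = h := by
    rw [add_eq_zero_iff_neg_eq, funext_iff, funext_iff]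
    simp only [Pi.neg_apply, ZMod.neg_eq_self_mod_two, eq_comm]
  simp_rw [← sum_neg_one_pow_dotProduct_mul_bernoulli q (_ ᵥ* G), mul_sum, ← mul_assoc, hchar]
  rw [sum_comm]
  simp_rw [← sum_mul, sum_neg_one_pow_dotProduct, hker, ite_mul, zero_mul, ← sum_filter]

end Characters

section Cosets

variable {ι κ K : Type*} [Fintype ι] [Fintype κ]

lemma sum_filter_submatrix_inl_mulVec_eq {M : Type*} [AddCommMonoid M] [DecidableEq ι]
    [DecidableEq κ] [CommRing K] [Fintype K] [DecidableEq K]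
    (A : Matrix (ι ⊕ κ) (ι ⊕ κ) K) (hA : IsUnit A) (h : ι → K) (F : (ι ⊕ κ → K) → M) :
    ∑ z with A.submatrix Sum.inl id *ᵥ z = h, F z = ∑ u : κ → K, F (A⁻¹ *ᵥ Sum.elim h u) := by
  have hdet := (isUnit_iff_isUnit_det A).mp hA
  have hsub (z : ι ⊕ κ → K) : A.submatrix Sum.inl id *ᵥ z = (A *ᵥ z) ∘ Sum.inl := rfl
  have hAinv (v : ι ⊕ κ → K) : A *ᵥ (A⁻¹ *ᵥ v) = v := by
    rw [mulVec_mulVec, mul_nonsing_inv A hdet, one_mulVec]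
  have hinvA (v : ι ⊕ κ → K) : A⁻¹ *ᵥ (A *ᵥ v) = v := by
    rw [mulVec_mulVec, nonsing_inv_mul A hdet, one_mulVec]
  symm
  refine sum_nbij' (fun u => A⁻¹ *ᵥ Sum.elim h u) (fun z => (A *ᵥ z) ∘ Sum.inr) ?_ ?_ ?_ ?_ ?_
  · simp [hsub, hAinv]
  · simp
  · simp [hAinv]
  · intro z hz
    rw [mem_filter_univ, hsub] at hz
    rw [← hz, Sum.elim_comp_inl_inr, hinvA]
  · simp

lemma mulVec_sumElim_eq_vecMul_add_vecMul {m : Type*} [CommSemiring K] (M : Matrix m (ι ⊕ κ) K)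
    (h : ι → K) (u : κ → K) :
    M *ᵥ Sum.elim h u = h ᵥ* Mᵀ.submatrix Sum.inl id + u ᵥ* Mᵀ.submatrix Sum.inr id := by
  ext i
  simp [mulVec, vecMul, dotProduct, Fintype.sum_sum_type, mul_comm]

end Cosets

theorem fourier_overlap_eq_coset_probability_general (k m : ℕ)
    (A : Matrix (Fin k ⊕ Fin m) (Fin k ⊕ Fin m) (ZMod 2)) (hA : IsUnit A)
    (θ p : ℝ)
    (hp : p = (1 - Real.cos θ) / 2)
    (h : Fin k → ZMod 2) :
    ((Real.sqrt 2) ^ k)⁻¹ *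
      (((Real.sqrt 2) ^ k)⁻¹ *
        ∑ g : Fin k → ZMod 2,
          (-1 : ℝ) ^ ((dotProduct h g).val) *
            Real.cos θ ^ hammingWt (Matrix.vecMul g (A.submatrix Sum.inl id)))
    = ∑ u : Fin m → ZMod 2,
        p ^ hammingWt (Matrix.vecMul h (((A⁻¹)ᵀ).submatrix Sum.inl id)
              + Matrix.vecMul u (((A⁻¹)ᵀ).submatrix Sum.inr id))
          * (1 - p) ^ ((k + m) - hammingWt (Matrix.vecMul h (((A⁻¹)ᵀ).submatrix Sum.inl id)
              + Matrix.vecMul u (((A⁻¹)ᵀ).submatrix Sum.inr id))) := by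
  have hcos : Real.cos θ = 1 - 2 * p := by rw [hp]; ring
  have hnorm : ((√2 ^ k)⁻¹ * (√2 ^ k)⁻¹ * 2 ^ k : ℝ) = 1 := by
    rw [← mul_inv, ← mul_pow, Real.mul_self_sqrt zero_le_two, inv_mul_cancel₀ (by positivity)]
  rw [hcos, sum_neg_one_pow_dotProduct_mul_pow_hammingWt_vecMul,
    sum_filter_submatrix_inl_mulVec_eq A hA, ← mul_assoc, ← mul_assoc, Fintype.card_fin, hnorm,
    one_mul]
  simp only [mulVec_sumElim_eq_vecMul_add_vecMul, Fintype.card_sum, Fintype.card_fin]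

/-- With C generated by the top k rows of invertible A, B = (A⁻¹)ᵀ
with top rows generating C^⫫ and bottom rows generating C^⊥, θ ∈ [0,π/2],
p = (1-cosθ)/2, and ŝ(h) = 2^{-k/2} ∑_g (-1)^{h·g} (cosθ)^{w_H(g G_C)}:
2^{-k/2} ŝ(h) = ∑_{z ∈ y_h ⊕ C^⊥} p^{w_H(z)} (1-p)^{n-w_H(z)}, where
y_h = h G_{C^⫫} and n = k + m. -/
theorem fourier_overlap_eq_coset_probability (k m : ℕ)
    (A : Matrix (Fin k ⊕ Fin m) (Fin k ⊕ Fin m) (ZMod 2)) (hA : IsUnit A)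
    (θ p : ℝ) (hθ0 : 0 ≤ θ) (hθ1 : θ ≤ Real.pi / 2)
    (hp : p = (1 - Real.cos θ) / 2)
    (h : Fin k → ZMod 2) :
    ((Real.sqrt 2) ^ k)⁻¹ *
      (((Real.sqrt 2) ^ k)⁻¹ *
        ∑ g : Fin k → ZMod 2,
          (-1 : ℝ) ^ ((dotProduct h g).val) *
            Real.cos θ ^ hammingWt (Matrix.vecMul g (A.submatrix Sum.inl id)))
    = ∑ u : Fin m → ZMod 2,
        p ^ hammingWt (Matrix.vecMul h (((A⁻¹)ᵀ).submatrix Sum.inl id)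
              + Matrix.vecMul u (((A⁻¹)ᵀ).submatrix Sum.inr id))
          * (1 - p) ^ ((k + m) - hammingWt (Matrix.vecMul h (((A⁻¹)ᵀ).submatrix Sum.inl id)
              + Matrix.vecMul u (((A⁻¹)ᵀ).submatrix Sum.inr id))) :=
  fourier_overlap_eq_coset_probability_general k m A hA θ p hp h
end

section
/- For the wire-tap secrecy scheme using cosets of C^⊥ over BSC(p), the posterior distribution of the secret message given received vector x̂ is a permutation (by the coset of x̂) of the posterior given any received vector in C^⊥: P(ĥ | x̂) = P(ĥ ⊕ ĥ' | x̂₀) where x̂ = ĥ' G_{C^⫫} ⊕ c' with c' ∈ C^⊥ and x̂₀ ∈ C^⊥. Consequently the Bhattacharyya coefficient between the posterior and the uniform distribution on F_2^k does not depend on the received vector. -/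
/-!
The likelihood of `x` given the message `h` depends only on the coset of `h G + x` modulo
`D = C^⊥`. Writing `x = a G + c` with `c ∈ D`, this coset is that of `(h + a) G`, so the
posterior given `x` is the posterior given `0` (or any `x₀ ∈ D`) composed with the translation
`h ↦ h + a`. A translation permutes `F_2^k`, so every sum `∑ h, F (P(h | x))`, in particular the
Bhattacharyya coefficient with the uniform distribution, is independent of `x`.
-/

open scoped Classical

/-- i.i.d. Bernoulli(p) probability of an error vector. -/
noncomputable def bernP (p : ℝ) (n : ℕ) {ι : Type*} [Fintype ι] (v : ι → ZMod 2) : ℝ :=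
  p ^ hammingWt v * (1 - p) ^ (n - hammingWt v)

/-- Bayes posterior of the secret message ĥ given received vector x̂ in the
wire-tap coset coding scheme using cosets of D = C^⊥ (uniform priors). -/
noncomputable def wiretapPost (n k : ℕ) (p : ℝ)
    (D : Submodule (ZMod 2) (Fin n → ZMod 2))
    (Gdd : Matrix (Fin k) (Fin n) (ZMod 2))
    (xh : Fin n → ZMod 2) (hh : Fin k → ZMod 2) : ℝ :=
  (∑ z : Fin n → ZMod 2,
      (if z + (Matrix.vecMul hh Gdd + xh) ∈ D then bernP p n z else 0)) /
    (∑ h' : Fin k → ZMod 2, ∑ z : Fin n → ZMod 2,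
      (if z + (Matrix.vecMul h' Gdd + xh) ∈ D then bernP p n z else 0))

/-- With `f = bernP p n` and `v = h G + x`, this is (up to the factor `|D|`) the likelihood of
receiving `x` given the message `h`: over `ZMod 2`, `z + h G + x ∈ D` iff `x = h G + c + z`
for some `c ∈ D`. -/
noncomputable def cosetMass {R M : Type*} [Ring R] [AddCommGroup M] [Module R M] [Fintype M]
    (D : Submodule R M) (f : M → ℝ) (v : M) : ℝ :=
  ∑ z, if z + v ∈ D then f z else 0

theorem cosetMass_add_of_mem {R M : Type*} [Ring R] [AddCommGroup M] [Module R M] [Fintype M]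
    (D : Submodule R M) (f : M → ℝ) {c : M} (hc : c ∈ D) (v : M) :
    cosetMass D f (v + c) = cosetMass D f v := by
  simp_rw [cosetMass, ← add_assoc, D.add_mem_iff_left hc]

section Wiretap

variable {n k : ℕ} {p : ℝ} {D : Submodule (ZMod 2) (Fin n → ZMod 2)}
  {Gdd : Matrix (Fin k) (Fin n) (ZMod 2)}

theorem wiretapPost_eq_cosetMass (x : Fin n → ZMod 2) (h : Fin k → ZMod 2) :
    wiretapPost n k p D Gdd x h =
      cosetMass D (bernP p n) (Matrix.vecMul h Gdd + x) /
        ∑ h', cosetMass D (bernP p n) (Matrix.vecMul h' Gdd + x) :=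
  rfl

theorem wiretapPost_of_eq_vecMul_add_mem {x c : Fin n → ZMod 2} {a : Fin k → ZMod 2}
    (hc : c ∈ D) (hx : x = Matrix.vecMul a Gdd + c) (h : Fin k → ZMod 2) :
    wiretapPost n k p D Gdd x h = wiretapPost n k p D Gdd 0 (h + a) := by
  have shift : ∀ g, cosetMass D (bernP p n) (Matrix.vecMul g Gdd + x) =
      cosetMass D (bernP p n) (Matrix.vecMul (g + a) Gdd + 0) := fun g => by
    rw [hx, Matrix.add_vecMul, add_zero, ← add_assoc, cosetMass_add_of_mem D _ hc]
  rw [wiretapPost_eq_cosetMass, wiretapPost_eq_cosetMass, shift, Fintype.sum_congr _ _ shift]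
  exact congrArg _ (Fintype.sum_equiv (Equiv.addRight a) _ _ fun _ => rfl)

theorem wiretapPost_of_mem {x : Fin n → ZMod 2} (hx : x ∈ D) (h : Fin k → ZMod 2) :
    wiretapPost n k p D Gdd x h = wiretapPost n k p D Gdd 0 h := by
  rw [wiretapPost_of_eq_vecMul_add_mem (a := 0) hx (by rw [Matrix.zero_vecMul, zero_add]),
    add_zero]

theorem sum_comp_wiretapPost_eq_of_eq_vecMul_add_mem {x c : Fin n → ZMod 2}
    {a : Fin k → ZMod 2} (hc : c ∈ D) (hx : x = Matrix.vecMul a Gdd + c) (F : ℝ → ℝ) :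
    ∑ h, F (wiretapPost n k p D Gdd x h) = ∑ h, F (wiretapPost n k p D Gdd 0 h) := by
  simp_rw [wiretapPost_of_eq_vecMul_add_mem hc hx]
  exact Fintype.sum_equiv (Equiv.addRight a) _ _ fun _ => rfl

end Wiretap

theorem wiretap_posterior_permutation_invariance_general (n k : ℕ) (p : ℝ)
    (D : Submodule (ZMod 2) (Fin n → ZMod 2))
    (Gdd : Matrix (Fin k) (Fin n) (ZMod 2))
    (hpart : ∀ x : Fin n → ZMod 2,
      ∃! hc : (Fin k → ZMod 2) × {c // c ∈ D},
        x = Matrix.vecMul hc.1 Gdd + (hc.2 : Fin n → ZMod 2)) :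
    (∀ (xh x0 : Fin n → ZMod 2) (hh hh' : Fin k → ZMod 2) (c' : Fin n → ZMod 2),
      c' ∈ D → xh = Matrix.vecMul hh' Gdd + c' → x0 ∈ D →
        wiretapPost n k p D Gdd xh hh = wiretapPost n k p D Gdd x0 (hh + hh')) ∧
    (∀ xh xh' : Fin n → ZMod 2,
      ∑ hh : Fin k → ZMod 2,
          Real.sqrt (wiretapPost n k p D Gdd xh hh * ((2 : ℝ) ^ k)⁻¹)
        = ∑ hh : Fin k → ZMod 2,
          Real.sqrt (wiretapPost n k p D Gdd xh' hh * ((2 : ℝ) ^ k)⁻¹)) := by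
  refine ⟨fun xh x0 hh hh' c' hc' hxh hx0 => ?_, fun xh xh' => ?_⟩
  · rw [wiretapPost_of_eq_vecMul_add_mem hc' hxh, wiretapPost_of_mem hx0]
  · have bhattacharyya_eq_at_zero : ∀ x,
        ∑ hh, Real.sqrt (wiretapPost n k p D Gdd x hh * ((2 : ℝ) ^ k)⁻¹) =
          ∑ hh, Real.sqrt (wiretapPost n k p D Gdd 0 hh * ((2 : ℝ) ^ k)⁻¹) := fun x => by
      obtain ⟨⟨a, c, hc⟩, hx, -⟩ := hpart x
      exact sum_comp_wiretapPost_eq_of_eq_vecMul_add_mem hc hx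
        (fun q => Real.sqrt (q * ((2 : ℝ) ^ k)⁻¹))
    rw [bhattacharyya_eq_at_zero xh, bhattacharyya_eq_at_zero xh']

/-- The wire-tap posterior given x̂ is a coset-permutation of the
posterior given any vector in C^⊥: P(ĥ|x̂) = P(ĥ ⊕ ĥ'|x̂₀) when
x̂ = ĥ' G_{C^⫫} ⊕ c' with c' ∈ C^⊥ and x̂₀ ∈ C^⊥.  Consequently the
Bhattacharyya coefficient between the posterior and the uniform distribution
on F_2^k does not depend on the received vector. -/
theorem wiretap_posterior_permutation_invariance (n k : ℕ) (p : ℝ)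
    (hp0 : 0 ≤ p) (hp1 : p ≤ 1)
    (D : Submodule (ZMod 2) (Fin n → ZMod 2))
    (Gdd : Matrix (Fin k) (Fin n) (ZMod 2))
    (hpart : ∀ x : Fin n → ZMod 2,
      ∃! hc : (Fin k → ZMod 2) × {c // c ∈ D},
        x = Matrix.vecMul hc.1 Gdd + (hc.2 : Fin n → ZMod 2)) :
    (∀ (xh x0 : Fin n → ZMod 2) (hh hh' : Fin k → ZMod 2) (c' : Fin n → ZMod 2),
      c' ∈ D → xh = Matrix.vecMul hh' Gdd + c' → x0 ∈ D →
        wiretapPost n k p D Gdd xh hh = wiretapPost n k p D Gdd x0 (hh + hh')) ∧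
    (∀ xh xh' : Fin n → ZMod 2,
      ∑ hh : Fin k → ZMod 2,
          Real.sqrt (wiretapPost n k p D Gdd xh hh * ((2 : ℝ) ^ k)⁻¹)
        = ∑ hh : Fin k → ZMod 2,
          Real.sqrt (wiretapPost n k p D Gdd xh' hh * ((2 : ℝ) ^ k)⁻¹)) :=
  wiretap_posterior_permutation_invariance_general n k p D Gdd hpart
end
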